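/- arXiv:2110.13974 — 2 statements merged into one kernel-verified Lean document; each statement's English description precedes it below -/
import Mathlib

section
/- (Bhatia–Davis inequality) Let X be a random variable with m ≤ X ≤ M almost surely and mean μ = E[X]. Then Var(X) ≤ (M - μ)(μ - m). -/
open MeasureTheory ProbabilityTheory

/-- Bhatia–Davis inequality: if `m ≤ X ≤ M` a.s. and `μ = E[X]`,
then `Var(X) ≤ (M - μ)(μ - m)`. -/
theorem bhatia_davis
    {Ω : Type*} [MeasurableSpace Ω] (Pr : Measure Ω) [IsProbabilityMeasure Pr]
    (X : Ω → ℝ) (m M : ℝ) (hint : Integrable X Pr)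
    (hbdd : ∀ᵐ ω ∂Pr, m ≤ X ω ∧ X ω ≤ M) :
    variance X Pr ≤ (M - ∫ ω, X ω ∂Pr) * ((∫ ω, X ω ∂Pr) - m) := by
  set μ := ∫ ω, X ω ∂Pr with hμ
  have hbound : ∀ᵐ ω ∂Pr, ‖X ω‖ ≤ max |m| |M| := by
    filter_upwards [hbdd] with ω ⟨h1, h2⟩
    rw [Real.norm_eq_abs, abs_le]
    constructor
    · calc -(max |m| |M|) ≤ -|m| := by simp
        _ ≤ m := neg_abs_le m
        _ ≤ X ω := h1
    · calc X ω ≤ M := h2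
        _ ≤ |M| := le_abs_self M
        _ ≤ max |m| |M| := le_max_right _ _
  have hL2 : MemLp X 2 Pr :=
    MemLp.of_bound hint.aestronglyMeasurable _ hbound
  have hsq : Integrable (fun ω => X ω ^ 2) Pr := hL2.integrable_sq
  have hvar : variance X Pr = (∫ ω, X ω ^ 2 ∂Pr) - μ ^ 2 := by
    rw [variance_eq_sub hL2]; rfl
  have hposint : 0 ≤ ∫ ω, (M - X ω) * (X ω - m) ∂Pr := by
    apply integral_nonneg_of_ae
    filter_upwards [hbdd] with ω ⟨h1, h2⟩
    exact mul_nonneg (by linarith) (by linarith)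
  have hexp : (fun ω => (M - X ω) * (X ω - m)) =
      fun ω => (M + m) * X ω - X ω ^ 2 - M * m := by
    funext ω; ring
  rw [hexp] at hposint
  have hval : ∫ ω, ((M + m) * X ω - X ω ^ 2 - M * m) ∂Pr
      = (M + m) * μ - (∫ ω, X ω ^ 2 ∂Pr) - M * m := by
    have h1 : Integrable (fun ω => (M + m) * X ω - X ω ^ 2) Pr :=
      (hint.const_mul (M + m)).sub hsq
    have h2 : Integrable (fun ω => (M + m) * X ω) Pr := hint.const_mul (M + m)
    rw [integral_sub h1 (integrable_const _), integral_sub h2 hsq,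
      integral_const_mul, integral_const]
    simp [hμ]
  rw [hval] at hposint
  rw [hvar]
  nlinarith [hposint]
end

section
/- Let ξ = (ξ₁,…,ξ_M) have independent components and let P̃(ξ) = Σ_{k=0}^N βₖ Ψₖ(ξ) be a polynomial chaos expansion in a tensorized orthonormal basis (E[ΨⱼΨₖ] = δ_{jk}, Ψ₀ ≡ 1). Then the first-order Sobol' index of P̃ with respect to ξᵢ equals Sᵢ = (Σ_{k ∈ Kᵢ} βₖ²)/(Σ_{k=1}^N βₖ²), where Kᵢ is the set of indices k ≥ 1 such that Ψₖ depends only on ξᵢ. -/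
/-!
Orthonormality makes the variance of a chaos expansion the sum of the squared non-constant
coefficients, so it suffices to identify `E[P̃ | ξᵢ]` as the partial expansion over the basis
functions depending on `ξᵢ` alone. Those are `σ(ξᵢ)`-measurable. Every other non-constant
`Ψₖ` has a centred factor `ψ_j(ξ_j)` with `j ≠ i`, independent of the remaining factors and of
`ξᵢ`, so its conditional expectation given `ξᵢ` vanishes.
-/

open MeasureTheory ProbabilityTheory

theorem condExp_mul_eq_zero_of_indep {Ω : Type*} {m mF mG mΩ : MeasurableSpace Ω}
    {μ : Measure Ω} [IsFiniteMeasure μ] (hmG : m ≤ mG) (hG : mG ≤ mΩ) (hF : mF ≤ mΩ)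
    (hindep : Indep mF mG μ) {f g : Ω → ℝ} (hf : StronglyMeasurable[mF] f)
    (hg : StronglyMeasurable[mG] g) (hfg : Integrable (f * g) μ) (hfi : Integrable f μ)
    (hf0 : ∫ ω, f ω ∂μ = 0) :
    μ[f * g | m] =ᵐ[μ] 0 := by
  have hpull : μ[f * g | mG] =ᵐ[μ] 0 := by
    filter_upwards [condExp_mul_of_stronglyMeasurable_right hg hfg hfi,
      condExp_indep_eq hF hG hf hindep] with ω hpull hindep
    simp [hpull, hindep, hf0]
  calc μ[f * g | m] =ᵐ[μ] μ[μ[f * g | mG] | m] := (condExp_condExp_of_le hmG hG).symm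
    _ =ᵐ[μ] μ[(0 : Ω → ℝ) | m] := condExp_congr_ae hpull
    _ = 0 := condExp_zero

theorem measurable_of_measurable_prod_of_ne_zero {ι : Type*} [Fintype ι]
    {α : ι → Type*} [∀ j, MeasurableSpace (α j)]
    {𝕜 : Type*} [Field 𝕜] [MeasurableSpace 𝕜] [MeasurableMul 𝕜] {ψ : ∀ j, α j → 𝕜}
    (h : Measurable fun x : ∀ j, α j => ∏ j, ψ j (x j)) {x₀ : ∀ j, α j}
    (hx₀ : ∏ j, ψ j (x₀ j) ≠ 0) (j : ι) : Measurable (ψ j) := by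
  classical
  have hrest : ∏ l ∈ Finset.univ.erase j, ψ l (x₀ l) ≠ 0 := by
    rw [← Finset.mul_prod_erase _ _ (Finset.mem_univ j)] at hx₀
    exact right_ne_zero_of_mul hx₀
  have hslice : ψ j = fun t => (∏ l, ψ l (Function.update x₀ j t l)) *
      (∏ l ∈ Finset.univ.erase j, ψ l (x₀ l))⁻¹ := by
    funext t
    simp only [Function.apply_update ψ, Finset.prod_update_of_mem (Finset.mem_univ j),
      Finset.sdiff_singleton_eq_erase]
    field_simp
  rw [hslice]
  exact (h.comp (measurable_update x₀)).mul_const _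

theorem condExp_finsetSum_const_mul {Ω ι : Type*} {m mΩ : MeasurableSpace Ω} {μ : Measure Ω}
    (S : Finset ι) (β : ι → ℝ) {f : ι → Ω → ℝ} (hf : ∀ k ∈ S, Integrable (f k) μ) :
    μ[fun ω => ∑ k ∈ S, β k * f k ω | m] =ᵐ[μ] fun ω => ∑ k ∈ S, β k * μ[f k | m] ω := by
  have hsum : (fun ω => ∑ k ∈ S, β k * f k ω) = ∑ k ∈ S, β k • f k := by
    ext ω; simp [Finset.sum_apply]
  rw [hsum]
  filter_upwards [condExp_finsetSum (fun k hk => (hf k hk).smul (β k)) m,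
    (Filter.eventually_all_finset S).2 fun k _ => condExp_smul (β k) (f k) m] with ω hω hsmul
  rw [hω, Finset.sum_apply]
  exact Finset.sum_congr rfl hsmul

section Orthonormal

variable {Ω ι : Type*} [MeasurableSpace Ω] {μ : Measure Ω} [DecidableEq ι] {X : ι → Ω → ℝ}
  (hX : ∀ k, AEStronglyMeasurable (X k) μ)
  (horth : ∀ j k, ∫ ω, X j ω * X k ω ∂μ = if j = k then 1 else 0)
include hX horth

theorem memLp_two_of_orthonormal (k : ι) : MemLp (X k) 2 μ := by
  refine (memLp_two_iff_integrable_sq (hX k)).2 (Integrable.of_integral_ne_zero ?_)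
  simp [pow_two, horth]

theorem integral_sum_sq_of_orthonormal (S : Finset ι) (β : ι → ℝ) :
    ∫ ω, (∑ k ∈ S, β k * X k ω) ^ 2 ∂μ = ∑ k ∈ S, β k ^ 2 := by
  have hL2 := memLp_two_of_orthonormal hX horth
  have hint : ∀ j k, Integrable (fun ω => β j * β k * (X j ω * X k ω)) μ :=
    fun j k => ((hL2 j).integrable_mul (hL2 k)).const_mul _
  have hexpand : ∀ ω, (∑ k ∈ S, β k * X k ω) ^ 2 =
      ∑ j ∈ S, ∑ k ∈ S, β j * β k * (X j ω * X k ω) := fun ω => by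
    rw [sq, Finset.sum_mul_sum]
    exact Finset.sum_congr rfl fun j _ => Finset.sum_congr rfl fun k _ => by ring
  simp_rw [hexpand]
  rw [integral_finsetSum _ fun j _ => integrable_finsetSum _ fun k _ => hint j k]
  simp_rw [integral_finsetSum _ fun k _ => hint _ k, integral_const_mul, horth, mul_ite,
    mul_one, mul_zero, Finset.sum_ite_eq, pow_two]
  exact Finset.sum_congr rfl fun k hk => if_pos hk

theorem variance_sum_of_orthonormal [IsProbabilityMeasure μ] {k₀ : ι} (hX₀ : X k₀ = 1)
    (S : Finset ι) (β : ι → ℝ) :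
    variance (fun ω => ∑ k ∈ S, β k * X k ω) μ = ∑ k ∈ S.erase k₀, β k ^ 2 := by
  have hL2 := memLp_two_of_orthonormal hX horth
  have hmean : ∀ k, ∫ ω, X k ω ∂μ = if k₀ = k then 1 else 0 := fun k => by
    simpa [hX₀] using horth k₀ k
  have hsum_mean : ∫ ω, ∑ k ∈ S, β k * X k ω ∂μ = if k₀ ∈ S then β k₀ else 0 := by
    rw [integral_finsetSum _ fun k _ => ((hL2 k).integrable one_le_two).const_mul _]
    simp_rw [integral_const_mul, hmean, mul_ite, mul_one, mul_zero, Finset.sum_ite_eq]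
  rw [variance_eq_sub (memLp_finsetSum S fun k _ => (hL2 k).const_mul _), Pi.pow_def,
    integral_sum_sq_of_orthonormal hX horth, hsum_mean]
  split_ifs with h₀
  · rw [← Finset.add_sum_erase S _ h₀]; ring
  · rw [Finset.erase_eq_of_notMem h₀]; ring

end Orthonormal

theorem stronglyMeasurable_comap_of_eq_comp_eval {Ω ι : Type*} {ξ : ι → Ω → ℝ}
    {Φ : (ι → ℝ) → ℝ} (hΦ : Measurable Φ) {i : ι} {g : ℝ → ℝ} (hg : ∀ x, Φ x = g (x i)) :
    StronglyMeasurable[MeasurableSpace.comap (ξ i) inferInstance] fun ω => Φ (fun l => ξ l ω) := by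
  classical
  have hfactor : (fun ω => Φ (fun l => ξ l ω)) = (fun t => Φ (Function.update 0 i t)) ∘ ξ i := by
    funext ω
    simp [hg]
  rw [hfactor]
  exact ((hΦ.comp (measurable_update 0)).comp (comap_measurable (ξ i))).stronglyMeasurable

theorem exists_ne_of_not_eq_comp_eval {ι E : Type*} [Fintype ι] {Φ : (ι → E) → ℝ} {ψ : ι → E → ℝ}
    (hfac : ∀ x, Φ x = ∏ j, ψ j (x j)) {Q : ι → Prop} (hψ : ∀ j, ψ j = (fun _ => 1) ∨ Q j)
    {i : ι} (hΦ : ¬∃ g : E → ℝ, ∀ x, Φ x = g (x i)) : ∃ j ≠ i, Q j := by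
  classical
  by_contra! hQ
  refine hΦ ⟨ψ i, fun x => ?_⟩
  rw [hfac, ← Finset.mul_prod_erase _ _ (Finset.mem_univ i), Finset.prod_eq_one, mul_one]
  intro j hj
  rcases hψ j with h | h
  · simp [h]
  · exact absurd h (hQ j (Finset.ne_of_mem_erase hj))

section Independent

variable {Ω ι : Type*} [MeasurableSpace Ω] {μ : Measure Ω} [Fintype ι]

theorem condExp_prod_eq_zero_of_iIndepFun [IsProbabilityMeasure μ] {β : ι → Type*}
    [∀ j, MeasurableSpace (β j)] {ξ : ∀ j, Ω → β j} (hξ : ∀ j, Measurable (ξ j))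
    (hindep : iIndepFun ξ μ) {ψ : ∀ j, β j → ℝ} (hψ : ∀ j, Measurable (ψ j)) {i j₀ : ι}
    (hij₀ : i ≠ j₀) (hint : Integrable (fun ω => ∏ j, ψ j (ξ j ω)) μ)
    (hint₀ : Integrable (fun ω => ψ j₀ (ξ j₀ ω)) μ) (hmean₀ : ∫ ω, ψ j₀ (ξ j₀ ω) ∂μ = 0) :
    μ[fun ω => ∏ j, ψ j (ξ j ω) | MeasurableSpace.comap (ξ i) inferInstance] =ᵐ[μ] 0 := by
  classical
  let mξ : ι → MeasurableSpace Ω := fun j => MeasurableSpace.comap (ξ j) inferInstance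
  have hmξ : ∀ j, mξ j ≤ ‹MeasurableSpace Ω› := fun j => (hξ j).comap_le
  let mRest := ⨆ j ∈ ({j₀}ᶜ : Set ι), mξ j
  have hindep₀ : Indep (mξ j₀) mRest μ := by
    have := indep_iSup_of_disjoint hmξ ((iIndepFun_iff_iIndep _ _ _).1 hindep)
      (disjoint_compl_right (a := ({j₀} : Set ι)))
    exact indep_of_indep_of_le_left this (le_biSup mξ (Set.mem_singleton j₀))
  have hle : ∀ j ≠ j₀, mξ j ≤ mRest := fun j hj => le_biSup mξ (Set.mem_compl_singleton_iff.2 hj)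
  have hsplit : (fun ω => ∏ j, ψ j (ξ j ω)) =
      (fun ω => ψ j₀ (ξ j₀ ω)) * fun ω => ∏ j ∈ Finset.univ.erase j₀, ψ j (ξ j ω) := by
    funext ω
    exact (Finset.mul_prod_erase _ _ (Finset.mem_univ j₀)).symm
  rw [hsplit] at hint ⊢
  refine condExp_mul_eq_zero_of_indep (hle i hij₀) (iSup₂_le fun j _ => hmξ j) (hmξ j₀) hindep₀
    ((hψ j₀).comp (comap_measurable _)).stronglyMeasurable ?_ hint hint₀ hmean₀
  refine Measurable.stronglyMeasurable (Finset.measurable_prod _ fun j hj => ?_)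
  exact (hψ j).comp ((comap_measurable (ξ j)).mono (hle j (Finset.ne_of_mem_erase hj)) le_rfl)

open Classical in
theorem condExp_comp_tensor_ae_eq_ite [IsProbabilityMeasure μ] {ξ : ι → Ω → ℝ}
    (hξ : ∀ j, Measurable (ξ j)) (hindep : iIndepFun ξ μ) {Φ : (ι → ℝ) → ℝ}
    (hΦ : Measurable Φ) (hint : Integrable (fun ω => Φ (fun l => ξ l ω)) μ)
    {ψ : ι → ℝ → ℝ} (hfac : ∀ x, Φ x = ∏ j, ψ j (x j))
    (hψ : ∀ j, (ψ j = fun _ => 1) ∨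
      ((∫ ω, ψ j (ξ j ω) ∂μ = 0) ∧ ∫ ω, (ψ j (ξ j ω)) ^ 2 ∂μ = 1)) (i : ι) :
    μ[fun ω => Φ (fun l => ξ l ω) | MeasurableSpace.comap (ξ i) inferInstance] =ᵐ[μ]
      if ∃ g : ℝ → ℝ, ∀ x, Φ x = g (x i) then fun ω => Φ (fun l => ξ l ω) else 0 := by
  split_ifs with hdep
  · obtain ⟨g, hg⟩ := hdep
    exact (condExp_of_stronglyMeasurable (hξ i).comap_le
      (stronglyMeasurable_comap_of_eq_comp_eval hΦ hg) hint).eventuallyEq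
  -- if `Φ ∘ ξ ≡ 0` the factors `ψ j` need not be measurable, but there is nothing to prove
  by_cases hzero : ∀ ω, Φ (fun l => ξ l ω) = 0
  · simp [show (fun ω => Φ (fun l => ξ l ω)) = 0 from funext hzero]
  obtain ⟨ω₀, hω₀⟩ := not_forall.1 hzero
  have hψm : ∀ j, Measurable (ψ j) := by
    refine measurable_of_measurable_prod_of_ne_zero ?_ (x₀ := fun l => ξ l ω₀) (by rwa [← hfac])
    simpa only [← hfac] using hΦ
  obtain ⟨j₀, hj₀i, hmean₀, hsq₀⟩ := exists_ne_of_not_eq_comp_eval hfac hψ hdep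
  have hint₀ : Integrable (fun ω => ψ j₀ (ξ j₀ ω)) μ := by
    have hsq : Integrable (fun ω => ψ j₀ (ξ j₀ ω) ^ 2) μ :=
      Integrable.of_integral_ne_zero (by simp [hsq₀])
    exact ((memLp_two_iff_integrable_sq ((hψm j₀).comp (hξ j₀)).aestronglyMeasurable).2
      hsq).integrable one_le_two
  simp only [hfac] at hint ⊢
  exact condExp_prod_eq_zero_of_iIndepFun hξ hindep hψm hj₀i.symm hint hint₀ hmean₀

end Independent

theorem sobol_first_order_index_of_pce_general
    {Ω : Type*} [MeasurableSpace Ω] (P : Measure Ω) [IsProbabilityMeasure P]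
    (M N : ℕ)
    (ξ : Fin M → Ω → ℝ)
    (hξmeas : ∀ j, Measurable (ξ j))
    (hξindep : iIndepFun ξ P)
    (Ψ : Fin (N + 1) → (Fin M → ℝ) → ℝ)
    (hΨmeas : ∀ k, Measurable (Ψ k))
    (hΨ0 : Ψ 0 = fun _ => 1)
    (horthonormal : ∀ j k,
      ∫ ω, Ψ j (fun l => ξ l ω) * Ψ k (fun l => ξ l ω) ∂P =
        if j = k then 1 else 0)
    (htensor : ∀ k : Fin (N + 1), ∃ ψ : Fin M → ℝ → ℝ,
      (∀ x, Ψ k x = ∏ j, ψ j (x j)) ∧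
      (∀ j, (ψ j = fun _ => 1) ∨
        ((∫ ω, ψ j (ξ j ω) ∂P = 0) ∧ ∫ ω, (ψ j (ξ j ω)) ^ 2 ∂P = 1)))
    (β : Fin (N + 1) → ℝ)
    (K : Fin M → Finset (Fin (N + 1)))
    (hK : ∀ i k, k ∈ K i ↔ k ≠ 0 ∧ ∃ g : ℝ → ℝ, ∀ x, Ψ k x = g (x i)) :
    ∀ i : Fin M,
      variance
          (condExp (MeasurableSpace.comap (ξ i) inferInstance) P
            (fun ω => ∑ k, β k * Ψ k (fun l => ξ l ω))) P /
        variance (fun ω => ∑ k, β k * Ψ k (fun l => ξ l ω)) P =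
      (∑ k ∈ K i, β k ^ 2) /
        ∑ k ∈ Finset.univ.filter (fun k => k ≠ 0), β k ^ 2 := by
  classical
  intro i
  set X : Fin (N + 1) → Ω → ℝ := fun k ω => Ψ k (fun l => ξ l ω)
  have hXm : ∀ k, AEStronglyMeasurable (X k) P := fun k =>
    ((hΨmeas k).comp (measurable_pi_lambda _ hξmeas)).aestronglyMeasurable
  have hX0 : X 0 = 1 := by funext ω; simp [X, hΨ0]
  have hXint : ∀ k, Integrable (X k) P := fun k =>
    (memLp_two_of_orthonormal hXm horthonormal k).integrable one_le_two
  set D := Finset.univ.filter fun k => ∃ g : ℝ → ℝ, ∀ x, Ψ k x = g (x i)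
  have hterm : ∀ k, P[X k | MeasurableSpace.comap (ξ i) inferInstance] =ᵐ[P]
      if k ∈ D then X k else 0 := fun k => by
    obtain ⟨ψ, hfac, hψ⟩ := htensor k
    simpa [D] using condExp_comp_tensor_ae_eq_ite hξmeas hξindep (hΨmeas k) (hXint k) hfac hψ i
  have hcond : P[fun ω => ∑ k, β k * X k ω | MeasurableSpace.comap (ξ i) inferInstance] =ᵐ[P]
      fun ω => ∑ k ∈ D, β k * X k ω := by
    filter_upwards [condExp_finsetSum_const_mul (m := MeasurableSpace.comap (ξ i) inferInstance)
      Finset.univ β fun k _ => hXint k, ae_all_iff.2 hterm] with ω hsum hterms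
    simp only [hsum, hterms, apply_ite (fun f : Ω → ℝ => f ω), Pi.zero_apply, mul_ite, mul_zero,
      Finset.sum_ite_mem, Finset.univ_inter]
  have hD : D.erase 0 = K i := by
    ext k; simp [D, hK]
  rw [variance_congr hcond, variance_sum_of_orthonormal hXm horthonormal hX0,
    variance_sum_of_orthonormal hXm horthonormal hX0, hD, Finset.filter_ne']

/-- For a polynomial chaos expansion `P̃(ξ) = ∑ₖ β k Ψ k (ξ)` in a tensorized
orthonormal basis (`E[Ψ j Ψ k] = δ_{jk}`, `Ψ 0 ≡ 1`) with independent input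
components `ξ 1, …, ξ M`, the first-order Sobol' index with respect to `ξ i`
is `S i = (∑_{k ∈ K i} (β k)²) / (∑_{k=1}^N (β k)²)`, where `K i` is the set
of indices `k ≥ 1` such that `Ψ k` depends only on the `i`-th coordinate. -/
theorem sobol_first_order_index_of_pce
    {Ω : Type*} [MeasurableSpace Ω] (P : Measure Ω) [IsProbabilityMeasure P]
    (M N : ℕ) (hM : 0 < M)
    (ξ : Fin M → Ω → ℝ)
    (hξmeas : ∀ j, Measurable (ξ j))
    (hξindep : iIndepFun ξ P)
    (Ψ : Fin (N + 1) → (Fin M → ℝ) → ℝ)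
    (hΨmeas : ∀ k, Measurable (Ψ k))
    (hΨ0 : Ψ 0 = fun _ => 1)
    (horthonormal : ∀ j k,
      ∫ ω, Ψ j (fun l => ξ l ω) * Ψ k (fun l => ξ l ω) ∂P =
        if j = k then 1 else 0)
    (htensor : ∀ k : Fin (N + 1), ∃ ψ : Fin M → ℝ → ℝ,
      (∀ x, Ψ k x = ∏ j, ψ j (x j)) ∧
      (∀ j, (ψ j = fun _ => 1) ∨
        ((∫ ω, ψ j (ξ j ω) ∂P = 0) ∧ ∫ ω, (ψ j (ξ j ω)) ^ 2 ∂P = 1)))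
    (β : Fin (N + 1) → ℝ)
    (K : Fin M → Finset (Fin (N + 1)))
    (hK : ∀ i k, k ∈ K i ↔ k ≠ 0 ∧ ∃ g : ℝ → ℝ, ∀ x, Ψ k x = g (x i))
    (hVar : 0 < variance (fun ω => ∑ k, β k * Ψ k (fun l => ξ l ω)) P) :
    ∀ i : Fin M,
      variance
          (condExp (MeasurableSpace.comap (ξ i) inferInstance) P
            (fun ω => ∑ k, β k * Ψ k (fun l => ξ l ω))) P /
        variance (fun ω => ∑ k, β k * Ψ k (fun l => ξ l ω)) P =
      (∑ k ∈ K i, β k ^ 2) /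
        ∑ k ∈ Finset.univ.filter (fun k => k ≠ 0), β k ^ 2 :=
  sobol_first_order_index_of_pce_general P M N ξ hξmeas hξindep Ψ hΨmeas hΨ0 horthonormal htensor β
    K hK
end
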